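/- arXiv:math/9903042 — 2 statements merged into one kernel-verified Lean document; each statement's English description precedes it below -/
import Mathlib

section
/- Let d ≥ 1, r > d - 1, and let (a_k), (b_k) be sequences indexed by ℤ^d \ {0} with |a_k| ≤ C/|k|^r and |b_k| ≤ C/|k|^r for all nonzero k. Then there is a constant c (depending only on r and d, not on k) such that for every nonzero k ∈ ℤ^d, the sum over decompositions k = l₁ + l₂ with l₁, l₂ ∈ ℤ^d \ {0} of |a_{l₁}| |b_{l₂}| |k|/|l₂| is at most c · (2^r |k| + 2^{r+1}(6|k|+1)^{d/2} + (1/2)|k|^{d-1-r}) · C²/|k|^r. -/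
noncomputable def znorm {d : ℕ} (l : Fin d → ℤ) : ℝ := Real.sqrt (∑ i, ((l i : ℝ))^2)

/-!
Write `A = |l|`, `M = |k - l|`. The decay hypotheses bound a term by `C² |k| M^{-r} A^{-(r+1)}`; since
`|k| ≤ A + M`, one of `A`, `M` is at least `|k|/2`. If `M ≥ |k|/2` then `M^{-r} ≤ (|k|/2)^{-r}`;
otherwise `A ≥ |k|/2` and `M^{-r} = M · M^{-(r+1)} ≤ (|k|/2) M^{-(r+1)}`. Either way the term is
`≤ C² |k| (|k|/2)^{-r} (A^{-(r+1)} + M^{-(r+1)})`, and `∑_{m ∈ ℤ^d} |m|^{-(r+1)}` converges because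
`r + 1 > d`, so the sum is `≤ 2 Z · 2^r |k| · C² / |k|^r` with `Z` that lattice sum.
-/

lemma rpow_neg_eq_mul_rpow_neg_add_one {y : ℝ} (hy : 0 < y) (r : ℝ) :
    y ^ (-r) = y * y ^ (-(r + 1)) := by
  rw [show -r = 1 + -(r + 1) by ring, Real.rpow_add hy, Real.rpow_one]

lemma rpow_neg_mul_rpow_neg_add_one_le {x y z r : ℝ} (hx : 0 < x) (hy : 0 < y) (hz : 0 ≤ z)
    (hr : 0 ≤ r) (hxyz : 2 * x ≤ y + z) :
    y ^ (-r) * z ^ (-(r + 1)) ≤ x ^ (-r) * (z ^ (-(r + 1)) + y ^ (-(r + 1))) := by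
  have hy' : 0 ≤ y ^ (-(r + 1)) := Real.rpow_nonneg hy.le _
  have hz' : 0 ≤ z ^ (-(r + 1)) := Real.rpow_nonneg hz _
  rcases le_or_gt x y with hxy | hyx
  · calc y ^ (-r) * z ^ (-(r + 1)) ≤ x ^ (-r) * z ^ (-(r + 1)) :=
          mul_le_mul_of_nonneg_right (Real.rpow_le_rpow_of_nonpos hx hxy (by linarith)) hz'
      _ ≤ x ^ (-r) * (z ^ (-(r + 1)) + y ^ (-(r + 1))) := by gcongr; linarith
  · have hxz : x ≤ z := by linarith
    calc y ^ (-r) * z ^ (-(r + 1)) = y * y ^ (-(r + 1)) * z ^ (-(r + 1)) := by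
          rw [rpow_neg_eq_mul_rpow_neg_add_one hy r]
      _ ≤ x * y ^ (-(r + 1)) * x ^ (-(r + 1)) := by
          refine mul_le_mul (mul_le_mul_of_nonneg_right hyx.le hy') ?_ hz' (by positivity)
          exact Real.rpow_le_rpow_of_nonpos hx hxz (by linarith)
      _ = x ^ (-r) * y ^ (-(r + 1)) := by
          rw [rpow_neg_eq_mul_rpow_neg_add_one hx r]; ring
      _ ≤ x ^ (-r) * (z ^ (-(r + 1)) + y ^ (-(r + 1))) := by gcongr; linarith

lemma tsum_le_mul_two_mul_tsum_of_le_add_comp_sub {G : Type*} [AddCommGroup G] {s : Set G}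
    {f : s → ℝ} {w : G → ℝ} (hw : Summable w) (hw0 : ∀ m, 0 ≤ w m) (hf0 : ∀ l, 0 ≤ f l)
    {c : ℝ} (hc : 0 ≤ c) (k : G) (hf : ∀ l : s, f l ≤ c * (w l + w (k - l))) :
    ∑' l, f l ≤ c * (2 * ∑' m, w m) := by
  have hw' : Summable fun l => w (k - l) := (Equiv.subLeft k).summable_iff.mpr hw
  have hg := hw.add hw'
  have hgs := (hg.subtype s).mul_left c
  calc ∑' l, f l ≤ ∑' l : s, c * (w l + w (k - l)) :=
        Summable.tsum_le_tsum hf (.of_nonneg_of_le hf0 hf hgs) hgs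
    _ = c * ∑' l : s, (w l + w (k - l)) := tsum_mul_left
    _ ≤ c * ∑' l, (w l + w (k - l)) :=
        mul_le_mul_of_nonneg_left (hg.tsum_subtype_le _ s fun l => add_nonneg (hw0 _) (hw0 _)) hc
    _ = c * (2 * ∑' m, w m) := by
        have hshift : ∑' l, w (k - l) = ∑' m, w m := (Equiv.subLeft k).tsum_eq w
        rw [hw.tsum_add hw', hshift]
        ring

section ZVector

variable {d : ℕ}

noncomputable def intCastEuclidean (m : Fin d → ℤ) : EuclideanSpace ℝ (Fin d) :=
  WithLp.toLp 2 fun i => (m i : ℝ)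

lemma znorm_eq_norm_intCastEuclidean (m : Fin d → ℤ) : znorm m = ‖intCastEuclidean m‖ := by
  simp [znorm, intCastEuclidean, EuclideanSpace.norm_eq]

lemma intCastEuclidean_sub (m n : Fin d → ℤ) :
    intCastEuclidean (m - n) = intCastEuclidean m - intCastEuclidean n := by
  ext i
  simp [intCastEuclidean]

lemma intCastEuclidean_injective : Function.Injective (intCastEuclidean (d := d)) := by
  intro m n h
  funext i
  simpa [intCastEuclidean] using congrArg (· i) h

lemma znorm_nonneg (m : Fin d → ℤ) : 0 ≤ znorm m := Real.sqrt_nonneg _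

lemma znorm_pos {m : Fin d → ℤ} (hm : m ≠ 0) : 0 < znorm m := by
  rw [znorm_eq_norm_intCastEuclidean, norm_pos_iff]
  intro h
  exact hm (intCastEuclidean_injective (h.trans (by ext; simp [intCastEuclidean])))

lemma znorm_le_znorm_sub_add (k l : Fin d → ℤ) : znorm k ≤ znorm (k - l) + znorm l := by
  simp only [znorm_eq_norm_intCastEuclidean, intCastEuclidean_sub]
  exact norm_le_norm_sub_add _ _

lemma intCastEuclidean_mem_span (m : Fin d → ℤ) :
    intCastEuclidean m ∈ Submodule.span ℤ (Set.range (EuclideanSpace.basisFun (Fin d) ℝ).toBasis) := by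
  have : intCastEuclidean m = ∑ i, m i • (EuclideanSpace.basisFun (Fin d) ℝ).toBasis i := by
    ext j
    simp [intCastEuclidean, Finset.sum_apply, Pi.single_apply]
  rw [this]
  exact Submodule.sum_mem _ fun i _ => Submodule.smul_mem _ _ (Submodule.subset_span ⟨i, rfl⟩)

lemma summable_znorm_rpow {s : ℝ} (hs : s < -d) : Summable fun m : Fin d → ℤ => znorm m ^ s := by
  set L := Submodule.span ℤ (Set.range (EuclideanSpace.basisFun (Fin d) ℝ).toBasis)
  have hrank : Module.finrank ℤ L = d := by
    rw [ZLattice.rank ℝ L, finrank_euclideanSpace_fin]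
  have hL := ZLattice.summable_norm_rpow L s (by rwa [hrank])
  refine (hL.comp_injective (i := fun m => ⟨intCastEuclidean m, intCastEuclidean_mem_span m⟩) ?_).congr ?_
  · intro m n h
    exact intCastEuclidean_injective (congrArg Subtype.val h)
  · intro m
    simp [znorm_eq_norm_intCastEuclidean]

lemma abs_mul_abs_mul_znorm_div_le {C r : ℝ} (hr : 0 ≤ r) {a b : (Fin d → ℤ) → ℝ}
    (ha : ∀ k : Fin d → ℤ, k ≠ 0 → |a k| ≤ C / znorm k ^ r)
    (hb : ∀ k : Fin d → ℤ, k ≠ 0 → |b k| ≤ C / znorm k ^ r)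
    {k l : Fin d → ℤ} (hk : k ≠ 0) (hl : l ≠ 0) (hkl : k - l ≠ 0) :
    |a (k - l)| * |b l| * (znorm k / znorm l) ≤
      C ^ 2 * znorm k * (znorm k / 2) ^ (-r) * (znorm l ^ (-(r + 1)) + znorm (k - l) ^ (-(r + 1))) := by
  have hK := znorm_pos hk
  have hA := znorm_pos hl
  have hM := znorm_pos hkl
  have hMA : 2 * (znorm k / 2) ≤ znorm (k - l) + znorm l := by
    linarith [znorm_le_znorm_sub_add k l]
  calc |a (k - l)| * |b l| * (znorm k / znorm l)
      ≤ C / znorm (k - l) ^ r * (C / znorm l ^ r) * (znorm k / znorm l) := by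
        gcongr
        · exact (abs_nonneg _).trans (ha _ hkl)
        · exact ha _ hkl
        · exact hb _ hl
    _ = C ^ 2 * znorm k * (znorm (k - l) ^ (-r) * znorm l ^ (-(r + 1))) := by
        rw [neg_add, Real.rpow_add hA, Real.rpow_neg hM.le, Real.rpow_neg hA.le,
          Real.rpow_neg_one]
        field_simp
    _ ≤ C ^ 2 * znorm k * ((znorm k / 2) ^ (-r) *
          (znorm l ^ (-(r + 1)) + znorm (k - l) ^ (-(r + 1)))) := by
        refine mul_le_mul_of_nonneg_left ?_ (by positivity)
        exact rpow_neg_mul_rpow_neg_add_one_le (by positivity) hM hA.le hr hMA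
    _ = _ := by ring

end ZVector

theorem convolution_lemma (d : ℕ) (hd : 1 ≤ d) (r : ℝ) (hr : r > (d : ℝ) - 1) :
    ∃ c : ℝ, ∀ (C : ℝ) (a b : (Fin d → ℤ) → ℝ),
      (∀ k : Fin d → ℤ, k ≠ 0 → |a k| ≤ C / znorm k ^ r) →
      (∀ k : Fin d → ℤ, k ≠ 0 → |b k| ≤ C / znorm k ^ r) →
      ∀ k : Fin d → ℤ, k ≠ 0 →
        ∑' l : {l : Fin d → ℤ // l ≠ 0 ∧ k - l ≠ 0},
            |a (k - l.1)| * |b l.1| * (znorm k / znorm l.1)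
          ≤ c * ((2 : ℝ) ^ r * znorm k + (2 : ℝ) ^ (r + 1) * (6 * znorm k + 1) ^ ((d : ℝ) / 2)
              + (1 / 2) * znorm k ^ ((d : ℝ) - 1 - r)) * (C ^ 2 / znorm k ^ r) := by
  have hr0 : 0 ≤ r := by
    have : (1 : ℝ) ≤ d := by exact_mod_cast hd
    linarith
  set Z := ∑' m : Fin d → ℤ, znorm m ^ (-(r + 1))
  have hw0 (m : Fin d → ℤ) : 0 ≤ znorm m ^ (-(r + 1)) := Real.rpow_nonneg (znorm_nonneg m) _
  have hZ : 0 ≤ Z := tsum_nonneg hw0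
  refine ⟨2 * Z, fun C a b ha hb k hk => ?_⟩
  have hK := znorm_pos hk
  have hsum := tsum_le_mul_two_mul_tsum_of_le_add_comp_sub (s := {l | l ≠ 0 ∧ k - l ≠ 0})
    (summable_znorm_rpow (by linarith)) hw0
    (fun l => mul_nonneg (by positivity) (div_nonneg hK.le (znorm_nonneg _)))
    (by positivity) k fun l => abs_mul_abs_mul_znorm_div_le hr0 ha hb hk l.2.1 l.2.2
  have hhalf : (znorm k / 2) ^ (-r) = 2 ^ r / znorm k ^ r := by
    rw [Real.rpow_neg (by positivity), Real.div_rpow hK.le zero_le_two, inv_div]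
  calc _ ≤ C ^ 2 * znorm k * (znorm k / 2) ^ (-r) * (2 * Z) := hsum
    _ = 2 * Z * ((2 : ℝ) ^ r * znorm k) * (C ^ 2 / znorm k ^ r) := by rw [hhalf]; ring
    _ ≤ _ := by
      gcongr
      have : 0 ≤ (2 : ℝ) ^ (r + 1) * (6 * znorm k + 1) ^ ((d : ℝ) / 2) := by positivity
      have : 0 ≤ (1 / 2) * znorm k ^ ((d : ℝ) - 1 - r) := by positivity
      linarith
end

section
/- Let r > 1 and let (a_k), (b_k) be sequences indexed by ℤ² \ {0} with |a_k| ≤ C/|k|^r and |b_k| ≤ C/|k|^r. Then there is a constant c depending only on r such that for every nonzero k ∈ ℤ², the partial convolution sum over decompositions k = l₁ + l₂ with |l₂| ≤ |k|/2 of |a_{l₁}| |b_{l₂}| |k|/|l₂| is at most c · 2^r · |k| · C²/|k|^r. -/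
noncomputable def phi (l : Fin 2 → ℤ) : EuclideanSpace ℝ (Fin 2) :=
  (WithLp.equiv 2 (Fin 2 → ℝ)).symm (fun i => (l i : ℝ))

lemma znorm_eq_norm (l : Fin 2 → ℤ) : znorm l = ‖phi l‖ := by
  unfold znorm phi
  rw [EuclideanSpace.norm_eq]
  simp [Real.norm_eq_abs, sq_abs]

lemma znorm_triangle (k l : Fin 2 → ℤ) : znorm k ≤ znorm (k - l) + znorm l := by
  rw [znorm_eq_norm, znorm_eq_norm, znorm_eq_norm]
  have : phi k = phi (k - l) + phi l := by
    ext i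
    simp [phi, Pi.sub_apply]
  rw [this]
  exact norm_add_le _ _

lemma norm_le_znorm (l : Fin 2 → ℤ) : ‖l‖ ≤ znorm l := by
  rw [EisensteinSeries.norm_eq_max_natAbs]
  have h : ∀ i : Fin 2, |(l i : ℝ)| ≤ znorm l := by
    intro i
    rw [znorm, ← Real.sqrt_sq_eq_abs]
    apply Real.sqrt_le_sqrt
    exact Finset.single_le_sum (f := fun j => ((l j : ℝ))^2) (fun j _ => sq_nonneg _)
      (Finset.mem_univ i)
  rw [Nat.cast_max, Nat.cast_natAbs, Nat.cast_natAbs, Int.cast_abs, Int.cast_abs]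
  exact max_le (h 0) (h 1)

lemma one_le_norm_int {l : Fin 2 → ℤ} (hl : l ≠ 0) : (1:ℝ) ≤ ‖l‖ := by
  rw [EisensteinSeries.norm_eq_max_natAbs]
  have : l 0 ≠ 0 ∨ l 1 ≠ 0 := by
    by_contra h
    push_neg at h
    apply hl
    funext i
    fin_cases i <;> simp [h.1, h.2]
  rcases this with h | h
  · exact_mod_cast le_max_of_le_left (by omega : 1 ≤ (l 0).natAbs)
  · exact_mod_cast le_max_of_le_right (by omega : 1 ≤ (l 1).natAbs)

lemma one_le_znorm {l : Fin 2 → ℤ} (hl : l ≠ 0) : 1 ≤ znorm l :=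
  (one_le_norm_int hl).trans (norm_le_znorm l)

lemma znorm_pos_s5 {l : Fin 2 → ℤ} (hl : l ≠ 0) : 0 < znorm l :=
  lt_of_lt_of_le one_pos (one_le_znorm hl)

theorem sigma1_estimate (r : ℝ) (hr : r > 1) :
    ∃ c : ℝ, ∀ (C : ℝ) (a b : (Fin 2 → ℤ) → ℝ),
      (∀ k : Fin 2 → ℤ, k ≠ 0 → |a k| ≤ C / znorm k ^ r) →
      (∀ k : Fin 2 → ℤ, k ≠ 0 → |b k| ≤ C / znorm k ^ r) →
      ∀ k : Fin 2 → ℤ, k ≠ 0 →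
        ∑' l : {l : Fin 2 → ℤ // l ≠ 0 ∧ k - l ≠ 0 ∧ znorm l ≤ znorm k / 2},
            |a (k - l.1)| * |b l.1| * (znorm k / znorm l.1)
          ≤ c * (2 : ℝ) ^ r * znorm k * (C ^ 2 / znorm k ^ r) := by
  refine ⟨∑' (l : Fin 2 → ℤ), ‖l‖ ^ (-(r+1)), ?_⟩
  intro C a b ha hb k hk
  set c := ∑' (l : Fin 2 → ℤ), ‖l‖ ^ (-(r+1)) with hc
  have hsum : Summable fun (l : Fin 2 → ℤ) => ‖l‖ ^ (-(r+1)) :=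
    EisensteinSeries.summable_one_div_norm_rpow (by linarith)
  -- C is nonneg
  have hne : (![1,0] : Fin 2 → ℤ) ≠ 0 := by
    intro h
    have := congrFun h 0
    simp at this
  have hC : 0 ≤ C := by
    have h1 := (abs_nonneg (a ![1,0])).trans (ha _ hne)
    have h2 : 0 < znorm (![1,0] : Fin 2 → ℤ) ^ r := Real.rpow_pos_of_pos (znorm_pos_s5 hne) r
    rcases div_nonneg_iff.mp h1 with ⟨h, _⟩ | ⟨_, h⟩
    · exact h
    · linarith
  have hkpos : 0 < znorm k := znorm_pos_s5 hk
  have hkr : 0 < znorm k ^ r := Real.rpow_pos_of_pos hkpos r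
  set K : ℝ := 2 ^ r * C ^ 2 * znorm k / znorm k ^ r with hK
  have hKnn : 0 ≤ K := by positivity
  set S := {l : Fin 2 → ℤ // l ≠ 0 ∧ k - l ≠ 0 ∧ znorm l ≤ znorm k / 2}
  set f : S → ℝ := fun l => |a (k - l.1)| * |b l.1| * (znorm k / znorm l.1) with hf
  set g : S → ℝ := fun l => K * ‖l.1‖ ^ (-(r+1)) with hg
  have hfnn : ∀ l : S, 0 ≤ f l := fun l => by
    have := znorm_pos_s5 l.2.1
    positivity
  have hle : ∀ l : S, f l ≤ g l := by
    rintro ⟨l, hl0, hkl0, hl2⟩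
    have hlpos : 0 < znorm l := znorm_pos_s5 hl0
    have hl1 : 1 ≤ znorm l := one_le_znorm hl0
    have hklpos : 0 < znorm (k - l) := znorm_pos_s5 hkl0
    have hhalf : znorm k / 2 ≤ znorm (k - l) := by
      have := znorm_triangle k l
      linarith
    -- bound on a
    have ha1 : |a (k - l)| ≤ C * 2 ^ r / znorm k ^ r := by
      refine (ha _ hkl0).trans ?_
      rw [div_le_div_iff₀ (Real.rpow_pos_of_pos hklpos r) hkr]
      have : znorm k ^ r ≤ (2 * znorm (k - l)) ^ r := by
        apply Real.rpow_le_rpow hkpos.le (by linarith) (by linarith)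
      calc C * znorm k ^ r ≤ C * (2 * znorm (k-l)) ^ r := by
            exact mul_le_mul_of_nonneg_left this hC
        _ = C * 2 ^ r * znorm (k-l) ^ r := by
            rw [Real.mul_rpow (by norm_num) hklpos.le]; ring
    have hb1 : |b l| ≤ C / znorm l ^ r := hb _ hl0
    have key : |a (k - l)| * |b l| * (znorm k / znorm l)
        ≤ (C * 2 ^ r / znorm k ^ r) * (C / znorm l ^ r) * (znorm k / znorm l) := by
      have h1 : 0 ≤ znorm k / znorm l := by positivity
      have h2 : 0 ≤ |b l| := abs_nonneg _
      have h3 : 0 ≤ C / znorm l ^ r := by positivity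
      have h4 : 0 ≤ C * 2 ^ r / znorm k ^ r := by positivity
      exact mul_le_mul (mul_le_mul ha1 hb1 h2 h4) le_rfl h1 (by positivity)
    refine key.trans ?_
    have hz : (C * 2 ^ r / znorm k ^ r) * (C / znorm l ^ r) * (znorm k / znorm l)
        = K * (znorm l ^ (r+1))⁻¹ := by
      rw [hK, Real.rpow_add hlpos, Real.rpow_one]
      field_simp
    rw [hz]
    apply mul_le_mul_of_nonneg_left _ hKnn
    rw [← Real.rpow_neg hlpos.le]
    exact Real.rpow_le_rpow_of_nonpos (lt_of_lt_of_le one_pos (one_le_norm_int hl0))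
      (norm_le_znorm l) (by linarith)
  have hgsum : Summable g := ((hsum.subtype _).mul_left K)
  have hfsum : Summable f := Summable.of_nonneg_of_le hfnn hle hgsum
  calc ∑' l : S, f l ≤ ∑' l : S, g l := Summable.tsum_le_tsum hle hfsum hgsum
    _ = K * ∑' l : S, ‖l.1‖ ^ (-(r+1)) := tsum_mul_left
    _ ≤ K * c := by
        apply mul_le_mul_of_nonneg_left _ hKnn
        exact Summable.tsum_subtype_le (fun l : Fin 2 → ℤ => ‖l‖ ^ (-(r+1))) _
          (fun l => Real.rpow_nonneg (norm_nonneg _) _) hsum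
    _ = c * 2 ^ r * znorm k * (C ^ 2 / znorm k ^ r) := by rw [hK]; ring
end
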